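/- For any complexity measure ψ and any decision table T, M_ψ(T) ≤ 2·Ŝ_ψ(T), where M_ψ(T) is the worst-case optimal adaptive-certificate complexity parameter and Ŝ_ψ(T) = max{S_ψ(T*) : T* ∈ [T]} is the maximum separation complexity over the closure of T. -/

import Mathlib

/- Decision tables over E_{k+2} = {0, ..., k+1}, following Ostonov & Moshkov,
"Deterministic and Strongly Nondeterministic Decision Trees for Decision Tables
from Closed Classes".  Columns are labeled with attributes (natural numbers),
rows are functions supported on the attribute set, decisions are Booleans. -/

namespace ClosedClasses

/-- A decision table with 0-1-decisions over `E_{k+2}`. Rows are pairwise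
different (they form a `Finset`) and vanish outside the attribute set. -/
structure Table (k : ℕ) where
  attrs : Finset ℕ
  rows : Finset (ℕ → Fin (k + 2))
  dec : (ℕ → Fin (k + 2)) → Bool
  supp : ∀ r ∈ rows, ∀ a ∉ attrs, r a = 0

namespace Table

variable {k : ℕ}

/-- Number of columns. -/
def W (T : Table k) : ℕ := T.attrs.card

/-- Number of rows. -/
def N (T : Table k) : ℕ := T.rows.card

/-- All rows carry the same decision. -/
def ConstDec (T : Table k) : Prop :=
  ∀ r ∈ T.rows, ∀ r' ∈ T.rows, T.dec r = T.dec r'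

/-- `D` separates the row `r` from all other rows of `T`. -/
def Separates (T : Table k) (D : Finset ℕ) (r : ℕ → Fin (k + 2)) : Prop :=
  D ⊆ T.attrs ∧ ∀ r' ∈ T.rows, r' ≠ r → ∃ a ∈ D, r a ≠ r' a

/-- `S(T, r)`: minimum cardinality of a separating set for row `r`. -/
noncomputable def Srow (T : Table k) (r : ℕ → Fin (k + 2)) : ℕ :=
  sInf {m | ∃ D : Finset ℕ, T.Separates D r ∧ D.card = m}

/-- `S(T)`: maximum over rows of `S(T, r)`. -/
noncomputable def S (T : Table k) : ℕ :=
  sSup {m | ∃ r ∈ T.rows, T.Srow r = m}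

/-- A test of `T`: a set of columns distinguishing rows with different decisions. -/
def IsTest (T : Table k) (D : Finset ℕ) : Prop :=
  D ⊆ T.attrs ∧
    ∀ r ∈ T.rows, ∀ r' ∈ T.rows, T.dec r ≠ T.dec r' → ∃ a ∈ D, r a ≠ r' a

/-- `Θ(T)`: minimum cardinality of a test of `T`. -/
noncomputable def theta (T : Table k) : ℕ :=
  sInf {m | ∃ D : Finset ℕ, T.IsTest D ∧ D.card = m}

end Table

/-- `(k+2)`-decision trees: leaves carry decisions, internal nodes query an
attribute and branch on its `k+2` possible values. -/
inductive DT (k : ℕ) where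
  | leaf : Bool → DT k
  | node : ℕ → (Fin (k + 2) → DT k) → DT k

namespace DT

variable {k : ℕ}

/-- Deterministic evaluation of a tree on a row. -/
def eval : DT k → (ℕ → Fin (k + 2)) → Bool
  | leaf b, _ => b
  | node a ch, r => eval (ch (r a)) r

/-- Depth: maximum number of queries along a complete path. -/
def depth : DT k → ℕ
  | leaf _ => 0
  | node _ ch => 1 + Finset.univ.sup fun i => (ch i).depth

/-- The set `P(Γ)` of attributes queried in the tree. -/
def attrSet : DT k → Finset ℕ
  | leaf _ => ∅
  | node a ch => insert a (Finset.univ.biUnion fun i => (ch i).attrSet)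

/-- `ψ`-cost: maximum over complete paths of `ψ` of the word of queried
attributes (the accumulator `w` holds attributes already queried). -/
def cost (ψ : List ℕ → ℕ) : DT k → List ℕ → ℕ
  | leaf _, w => ψ w
  | node a ch, w => Finset.univ.sup fun i => cost ψ (ch i) (a :: w)

end DT

/-- `Γ` is a deterministic decision tree for the table `T`. -/
def IsDT {k : ℕ} (T : Table k) (Γ : DT k) : Prop :=
  Γ.attrSet ⊆ T.attrs ∧ ∀ r ∈ T.rows, Γ.eval r = T.dec r

/-- `h^d(T)`: minimum depth of a deterministic decision tree for `T`. -/
noncomputable def hd {k : ℕ} (T : Table k) : ℕ :=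
  sInf {m | ∃ Γ : DT k, IsDT T Γ ∧ Γ.depth = m}

/-- `ψ^d(T)`: minimum `ψ`-complexity of a deterministic decision tree for `T`. -/
noncomputable def psid {k : ℕ} (ψ : List ℕ → ℕ) (T : Table k) : ℕ :=
  sInf {m | ∃ Γ : DT k, IsDT T Γ ∧ Γ.cost ψ [] = m}

/-- A row satisfies a rule (a conjunction of equations `attribute = value`). -/
def RuleSat {k : ℕ} (rule : List (ℕ × Fin (k + 2))) (r : ℕ → Fin (k + 2)) : Prop :=
  ∀ p ∈ rule, r p.1 = p.2

/-- A strongly nondeterministic decision tree for `T`, represented by the set of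
words of its complete paths (rules): every rule uses attributes of `T`, each
row with decision 1 satisfies some rule, and each rule is consistent only with
rows carrying decision 1. -/
def IsSNDT {k : ℕ} (T : Table k) (R : Finset (List (ℕ × Fin (k + 2)))) : Prop :=
  (∀ rule ∈ R, ∀ p ∈ rule, p.1 ∈ T.attrs) ∧
  (∀ r ∈ T.rows, T.dec r = true → ∃ rule ∈ R, RuleSat rule r) ∧
  (∀ rule ∈ R, ∀ r ∈ T.rows, RuleSat rule r → T.dec r = true)

/-- `ψ^s(T)`: minimum `ψ`-complexity of a strongly nondeterministic decision
tree for `T`. -/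
noncomputable def psis {k : ℕ} (ψ : List ℕ → ℕ) (T : Table k) : ℕ :=
  sInf {m | ∃ R, IsSNDT T R ∧ R.sup (fun rule => ψ (rule.map Prod.fst)) = m}

/-- `h^s(T)`: minimum depth of a strongly nondeterministic decision tree. -/
noncomputable def hs {k : ℕ} (T : Table k) : ℕ :=
  sInf {m | ∃ R, IsSNDT T R ∧ R.sup (fun rule => (rule.map Prod.fst).length) = m}

/-- A complexity measure on finite words over the alphabet `{f_i : i ∈ ω}`. -/
structure CMeasure where
  ψ : List ℕ → ℕ
  pos : ∀ w, ψ w = 0 ↔ w = []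
  perm : ∀ w w' : List ℕ, w.Perm w' → ψ w = ψ w'
  mono : ∀ w₁ w₂ : List ℕ, ψ w₁ ≤ ψ (w₁ ++ w₂)
  subadd : ∀ w₁ w₂ : List ℕ, ψ (w₁ ++ w₂) ≤ ψ w₁ + ψ w₂

/-- Bounded complexity measure: `ψ(α) ≥ |α|`. -/
def CMeasure.Bounded (ψ : CMeasure) : Prop := ∀ w : List ℕ, w.length ≤ ψ.ψ w

/-- Extension of a complexity measure to finite sets of attributes. -/
def CMeasure.setCost (ψ : CMeasure) (D : Finset ℕ) : ℕ := ψ.ψ (D.sort (· ≤ ·))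

namespace Table

variable {k : ℕ}

/-- `S_ψ(T, r)`: minimum `ψ`-complexity of a set separating `r` from the other rows. -/
noncomputable def Spsirow (ψ : CMeasure) (T : Table k) (r : ℕ → Fin (k + 2)) : ℕ :=
  sInf {m | ∃ D : Finset ℕ, T.Separates D r ∧ ψ.setCost D = m}

/-- `S_ψ(T)`: maximum over rows of `S_ψ(T, r)`. -/
noncomputable def Spsi (ψ : CMeasure) (T : Table k) : ℕ :=
  sSup {m | ∃ r ∈ T.rows, Spsirow ψ T r = m}

/-- `Θ_ψ(T)`: minimum `ψ`-complexity of a test of `T`. -/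
noncomputable def thetapsi (ψ : CMeasure) (T : Table k) : ℕ :=
  sInf {m | ∃ D : Finset ℕ, T.IsTest D ∧ ψ.setCost D = m}

/-- `W_ψ(T) = ψ(P(T))`. -/
def Wpsi (ψ : CMeasure) (T : Table k) : ℕ := ψ.setCost T.attrs

/-- `V_ψ(T) = max{ψ(f_i) : f_i ∈ P(T)}`. -/
noncomputable def Vpsi (ψ : CMeasure) (T : Table k) : ℕ :=
  sSup {m | ∃ a ∈ T.attrs, ψ.ψ [a] = m}

end Table

/-- Restriction of a row to a set of attributes. -/
def restrict {k : ℕ} (A : Finset ℕ) (r : ℕ → Fin (k + 2)) : ℕ → Fin (k + 2) :=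
  fun a => if a ∈ A then r a else 0

/-- `T'` belongs to the closure `[T]` of `T` under removal of columns and
changing of decisions: `T'` keeps a subset of the columns of `T`, its rows are
the restrictions of the rows of `T`, and its decisions are arbitrary. -/
def InClosure {k : ℕ} (T' T : Table k) : Prop :=
  T'.attrs ⊆ T.attrs ∧ (T'.rows : Set (ℕ → Fin (k + 2))) = restrict T'.attrs '' (T.rows : Set (ℕ → Fin (k + 2)))

/-- A nonempty class of decision tables closed under removal of columns and
changing of decisions. -/
def ClosedClass {k : ℕ} (A : Set (Table k)) : Prop :=
  A.Nonempty ∧ ∀ T ∈ A, ∀ T' : Table k, InClosure T' T → T' ∈ A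

/-- `Ŝ_ψ(T) = max{S_ψ(T') : T' ∈ [T]}`. -/
noncomputable def Shatpsi {k : ℕ} (ψ : CMeasure) (T : Table k) : ℕ :=
  sSup {m | ∃ T' : Table k, InClosure T' T ∧ T'.Spsi ψ = m}

/-- `Ŝ(T) = max{S(T') : T' ∈ [T]}`. -/
noncomputable def Shat {k : ℕ} (T : Table k) : ℕ :=
  sSup {m | ∃ T' : Table k, InClosure T' T ∧ T'.S = m}

/-- Fixing the attributes of the word `p` to the listed values restricts `T`
to a subtable (possibly empty) in which all rows carry the same decision. -/
def FixConst {k : ℕ} (T : Table k) (p : List (ℕ × Fin (k + 2))) : Prop :=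
  ∀ r ∈ T.rows, ∀ r' ∈ T.rows, RuleSat p r → RuleSat p r' → T.dec r = T.dec r'

/-- `M_ψ(T, δ)`: minimum `ψ`-value of a word of attributes of `T` whose
fixation to the values of `δ` yields a subtable with constant decisions. -/
noncomputable def Mpsirow {k : ℕ} (ψ : CMeasure) (T : Table k)
    (δ : ℕ → Fin (k + 2)) : ℕ :=
  sInf {m | ∃ p : List (ℕ × Fin (k + 2)),
    (∀ q ∈ p, q.1 ∈ T.attrs ∧ q.2 = δ q.1) ∧ FixConst T p ∧
      ψ.ψ (p.map Prod.fst) = m}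

/-- `M_ψ(T)`: maximum of `M_ψ(T, δ)` over all tuples `δ ∈ E_{k+2}^{W(T)}`. -/
noncomputable def Mpsi {k : ℕ} (ψ : CMeasure) (T : Table k) : ℕ :=
  sSup {m | ∃ δ : ℕ → Fin (k + 2), (∀ a ∉ T.attrs, δ a = 0) ∧ Mpsirow ψ T δ = m}

/-- A critical table: for every column there are two rows differing exactly
in this column. -/
def Critical {k : ℕ} (T : Table k) : Prop :=
  T.rows.Nonempty ∧ ∀ a ∈ T.attrs, ∃ r ∈ T.rows, ∃ r' ∈ T.rows,
    r a ≠ r' a ∧ ∀ b : ℕ, b ≠ a → r b = r' b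

/-- `H_D(n)`: the largest element of `D` not exceeding `n` (0 if none). -/
noncomputable def HD (D : Set ℕ) (n : ℕ) : ℕ := sSup (D ∩ Set.Iic n)

end ClosedClasses

/-
Fix `δ` and a row `r₁` agreeing with `δ` on the largest possible set `A` of columns. Deleting the
other columns gives a table in `[T]` in which a set `D ⊆ A` of `ψ`-cost at most `Ŝ_ψ(T)` separates
the image of `r₁`, so fixing `D` to `δ` already forces agreement with `δ` on all of `A`. If the
decision is not yet constant, two remaining rows differ in some column `a ∉ A`; the one-column table
on `a` shows `ψ(f_a) ≤ Ŝ_ψ(T)`, and by maximality of `A` no row agrees with `δ` on `A ∪ {a}`, so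
fixing `D ∪ {a}` gives the empty subtable at cost at most `2 Ŝ_ψ(T)`.
-/

namespace ClosedClasses

variable {k : ℕ}

namespace CMeasure

theorem le_of_subperm (ψ : CMeasure) {w w' : List ℕ} (h : w.Subperm w') : ψ.ψ w ≤ ψ.ψ w' := by
  rw [← ψ.perm _ _ (List.subperm_append_diff_self_of_count_le (List.subperm_ext_iff.1 h))]
  exact ψ.mono _ _

theorem setCost_mono (ψ : CMeasure) {D E : Finset ℕ} (h : D ⊆ E) :
    ψ.setCost D ≤ ψ.setCost E :=
  ψ.le_of_subperm <| List.subperm_of_subset (Finset.sort_nodup _ _) fun a ha => by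
    simpa using h (by simpa using ha)

theorem setCost_empty (ψ : CMeasure) : ψ.setCost ∅ = 0 := by
  rw [setCost, Finset.sort_empty, ψ.pos]

theorem setCost_singleton (ψ : CMeasure) (a : ℕ) : ψ.setCost {a} = ψ.ψ [a] := by
  rw [setCost, Finset.sort_singleton]

theorem setCost_insert_le (ψ : CMeasure) (a : ℕ) (D : Finset ℕ) :
    ψ.setCost (insert a D) ≤ ψ.ψ [a] + ψ.setCost D := by
  refine (ψ.le_of_subperm (w' := [a] ++ D.sort (· ≤ ·)) ?_).trans (ψ.subadd _ _)
  exact List.subperm_of_subset (Finset.sort_nodup _ _) fun b hb => by simpa using hb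

end CMeasure

theorem restrict_eq_restrict_iff {A : Finset ℕ} {r r' : ℕ → Fin (k + 2)} :
    restrict A r = restrict A r' ↔ Set.EqOn r r' A := by
  refine ⟨fun h a ha => by simpa [restrict, Finset.mem_coe.1 ha] using congrFun h a,
    fun h => funext fun a => ?_⟩
  by_cases ha : a ∈ A
  · simp [restrict, ha, h (Finset.mem_coe.2 ha)]
  · simp [restrict, ha]

namespace Table

theorem separates_attrs (T : Table k) {r : ℕ → Fin (k + 2)} (hr : r ∈ T.rows) :
    T.Separates T.attrs r := by
  refine ⟨subset_rfl, fun r' hr' hne => ?_⟩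
  by_contra! hc
  refine hne (funext fun a => ?_)
  by_cases ha : a ∈ T.attrs
  · exact (hc a ha).symm
  · rw [T.supp r hr a ha, T.supp r' hr' a ha]

theorem Spsirow_le_setCost (ψ : CMeasure) (T : Table k) {r : ℕ → Fin (k + 2)} {D : Finset ℕ}
    (h : T.Separates D r) : T.Spsirow ψ r ≤ ψ.setCost D :=
  Nat.sInf_le ⟨D, h, rfl⟩

theorem exists_separates_setCost_eq_Spsirow (ψ : CMeasure) (T : Table k)
    {r : ℕ → Fin (k + 2)} (hr : r ∈ T.rows) :
    ∃ D, T.Separates D r ∧ ψ.setCost D = T.Spsirow ψ r :=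
  Nat.sInf_mem (s := {m | ∃ D, T.Separates D r ∧ ψ.setCost D = m})
    ⟨_, _, T.separates_attrs hr, rfl⟩

theorem Spsi_le_setCost_attrs (ψ : CMeasure) (T : Table k) :
    T.Spsi ψ ≤ ψ.setCost T.attrs := by
  refine csSup_le' ?_
  rintro _ ⟨r, hr, rfl⟩
  exact T.Spsirow_le_setCost ψ (T.separates_attrs hr)

theorem Spsirow_le_Spsi (ψ : CMeasure) (T : Table k) {r : ℕ → Fin (k + 2)} (hr : r ∈ T.rows) :
    T.Spsirow ψ r ≤ T.Spsi ψ := by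
  refine le_csSup ⟨ψ.setCost T.attrs, ?_⟩ ⟨r, hr, rfl⟩
  rintro _ ⟨r', hr', rfl⟩
  exact T.Spsirow_le_setCost ψ (T.separates_attrs hr')

open Classical in
/-- Decisions play no role in separating sets, so they are set to `true`. -/
noncomputable def restrictTo (T : Table k) (A : Finset ℕ) : Table k where
  attrs := A
  rows := T.rows.image (restrict A)
  dec _ := true
  supp := by
    simp only [Finset.mem_image, forall_exists_index, and_imp]
    rintro _ r _ rfl a ha
    simp [restrict, ha]

theorem inClosure_restrictTo (T : Table k) {A : Finset ℕ} (hA : A ⊆ T.attrs) :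
    InClosure (T.restrictTo A) T := by
  classical
  exact ⟨hA, Finset.coe_image⟩

end Table

theorem Spsi_le_Shatpsi (ψ : CMeasure) {T' T : Table k} (h : InClosure T' T) :
    T'.Spsi ψ ≤ Shatpsi ψ T := by
  refine le_csSup ⟨ψ.setCost T.attrs, ?_⟩ ⟨T', h, rfl⟩
  rintro _ ⟨T'', h'', rfl⟩
  exact (T''.Spsi_le_setCost_attrs ψ).trans (ψ.setCost_mono h''.1)

theorem exists_subset_setCost_le_Shatpsi (ψ : CMeasure) (T : Table k) {A : Finset ℕ}
    (hA : A ⊆ T.attrs) {r : ℕ → Fin (k + 2)} (hr : r ∈ T.rows) :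
    ∃ D ⊆ A, ψ.setCost D ≤ Shatpsi ψ T ∧
      ∀ r' ∈ T.rows, Set.EqOn r' r D → Set.EqOn r' r A := by
  classical
  have hrA : restrict A r ∈ (T.restrictTo A).rows := Finset.mem_image_of_mem _ hr
  obtain ⟨D, ⟨hDA, hsep⟩, hD⟩ := (T.restrictTo A).exists_separates_setCost_eq_Spsirow ψ hrA
  refine ⟨D, hDA, hD ▸ ((T.restrictTo A).Spsirow_le_Spsi ψ hrA).trans
    (Spsi_le_Shatpsi ψ (T.inClosure_restrictTo hA)), fun r' hr' hD' => ?_⟩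
  rw [← restrict_eq_restrict_iff]
  by_contra hne
  obtain ⟨a, haD, ha⟩ := hsep _ (Finset.mem_image_of_mem _ hr') hne
  simp [restrict, hD' haD] at ha

theorem psi_singleton_le_Shatpsi (ψ : CMeasure) (T : Table k) {r r' : ℕ → Fin (k + 2)}
    (hr : r ∈ T.rows) (hr' : r' ∈ T.rows) {a : ℕ} (ha : a ∈ T.attrs) (hne : r a ≠ r' a) :
    ψ.ψ [a] ≤ Shatpsi ψ T := by
  obtain ⟨D, hD, hcost, hdet⟩ :=
    exists_subset_setCost_le_Shatpsi ψ T (Finset.singleton_subset_iff.2 ha) hr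
  obtain rfl | rfl := Finset.subset_singleton_iff.1 hD
  · exact absurd (hdet r' hr' (by simp) (Finset.mem_singleton_self a)).symm hne
  · rwa [ψ.setCost_singleton] at hcost

def fixRule (D : Finset ℕ) (δ : ℕ → Fin (k + 2)) : List (ℕ × Fin (k + 2)) :=
  (D.sort (· ≤ ·)).map fun a => (a, δ a)

theorem ruleSat_fixRule_iff {D : Finset ℕ} {δ r : ℕ → Fin (k + 2)} :
    RuleSat (fixRule D δ) r ↔ Set.EqOn r δ D := by
  simp [RuleSat, fixRule, Set.EqOn]

theorem Mpsirow_le_setCost (ψ : CMeasure) (T : Table k) {δ : ℕ → Fin (k + 2)} {D : Finset ℕ}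
    (hD : D ⊆ T.attrs)
    (hconst : ∀ r ∈ T.rows, ∀ r' ∈ T.rows, Set.EqOn r δ D → Set.EqOn r' δ D →
      T.dec r = T.dec r') :
    Mpsirow ψ T δ ≤ ψ.setCost D := by
  refine Nat.sInf_le ⟨fixRule D δ, ?_, ?_, ?_⟩
  · simpa [fixRule] using fun a ha => hD ha
  · simpa only [FixConst, ruleSat_fixRule_iff] using hconst
  · simp [fixRule, CMeasure.setCost, Function.comp_def]

def agreeSet (T : Table k) (r δ : ℕ → Fin (k + 2)) : Finset ℕ :=
  T.attrs.filter fun a => r a = δ a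

theorem agreeSet_subset (T : Table k) (r δ : ℕ → Fin (k + 2)) : agreeSet T r δ ⊆ T.attrs :=
  Finset.filter_subset _ _

theorem ne_of_eqOn_agreeSet_of_max (T : Table k) {δ r₁ : ℕ → Fin (k + 2)}
    (hmax : ∀ r ∈ T.rows, (agreeSet T r δ).card ≤ (agreeSet T r₁ δ).card)
    {a : ℕ} (ha : a ∈ T.attrs) (haA : a ∉ agreeSet T r₁ δ) {r : ℕ → Fin (k + 2)}
    (hr : r ∈ T.rows) (hrA : Set.EqOn r δ (agreeSet T r₁ δ)) : r a ≠ δ a := by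
  intro hra
  have hsub : insert a (agreeSet T r₁ δ) ⊆ agreeSet T r δ := fun b hb =>
    (Finset.mem_insert.1 hb).elim (fun h => Finset.mem_filter.2 ⟨h ▸ ha, h ▸ hra⟩)
      fun h => Finset.mem_filter.2 ⟨agreeSet_subset T r₁ δ h, hrA h⟩
  have := Finset.card_le_card hsub
  rw [Finset.card_insert_of_notMem haA] at this
  exact absurd (hmax r hr) (by omega)

theorem Mpsirow_le_two_Shatpsi (ψ : CMeasure) (T : Table k) (δ : ℕ → Fin (k + 2)) :
    Mpsirow ψ T δ ≤ 2 * Shatpsi ψ T := by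
  obtain hempty | hne := T.rows.eq_empty_or_nonempty
  · calc Mpsirow ψ T δ
        ≤ ψ.setCost ∅ := Mpsirow_le_setCost ψ T (Finset.empty_subset _) (by simp [hempty])
      _ = 0 := ψ.setCost_empty
      _ ≤ 2 * Shatpsi ψ T := Nat.zero_le _
  obtain ⟨r₁, hr₁, hmax⟩ := T.rows.exists_max_image (fun r => (agreeSet T r δ).card) hne
  set A := agreeSet T r₁ δ
  have hAδ : Set.EqOn r₁ δ A := fun a ha => (Finset.mem_filter.1 ha).2
  obtain ⟨D, hDA, hDcost, hdet⟩ :=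
    exists_subset_setCost_le_Shatpsi ψ T (agreeSet_subset T r₁ δ) hr₁
  have hagree : ∀ r ∈ T.rows, Set.EqOn r δ D → Set.EqOn r δ A := fun r hr h =>
    (hdet r hr fun a ha => (h ha).trans (hAδ (hDA ha)).symm).trans hAδ
  by_cases hconst : ∀ r ∈ T.rows, ∀ r' ∈ T.rows, Set.EqOn r δ D → Set.EqOn r' δ D →
      T.dec r = T.dec r'
  · have := Mpsirow_le_setCost ψ T (hDA.trans (agreeSet_subset T r₁ δ)) hconst
    omega
  push Not at hconst
  obtain ⟨r, hr, r', hr', hrD, hr'D, hdec⟩ := hconst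
  obtain ⟨a, ha, hdiff⟩ := (T.separates_attrs hr).2 r' hr' fun h => hdec (by rw [h])
  have haA : a ∉ A := fun h => hdiff ((hagree r hr hrD h).trans (hagree r' hr' hr'D h).symm)
  have hempty : ∀ s ∈ T.rows, ¬ Set.EqOn s δ ↑(insert a D) := fun s hs h => by
    rw [Finset.coe_insert] at h
    exact ne_of_eqOn_agreeSet_of_max T hmax ha haA hs
      (hagree s hs (h.mono (Set.subset_insert _ _))) (h (Set.mem_insert _ _))
  calc Mpsirow ψ T δ
      ≤ ψ.setCost (insert a D) :=
        Mpsirow_le_setCost ψ T (Finset.insert_subset ha (hDA.trans (agreeSet_subset T r₁ δ)))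
          fun s hs _ _ h _ => absurd h (hempty s hs)
    _ ≤ ψ.ψ [a] + ψ.setCost D := ψ.setCost_insert_le a D
    _ ≤ 2 * Shatpsi ψ T := by
        have := psi_singleton_le_Shatpsi ψ T hr hr' ha hdiff
        omega

end ClosedClasses

open ClosedClasses

/-- Lemma 7: `M_ψ(T) ≤ 2·Ŝ_ψ(T)`. -/
theorem Mpsi_le_two_Shatpsi (k : ℕ) (ψ : CMeasure) (T : Table k) :
    Mpsi ψ T ≤ 2 * Shatpsi ψ T :=
  csSup_le' fun _ ⟨δ, _, hm⟩ => hm ▸ Mpsirow_le_two_Shatpsi ψ T δ
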